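/- arXiv:2603.03847 — 2 statements merged into one kernel-verified Lean document; each statement's English description precedes it below -/
import Mathlib

section
/- Let p ≥ 1 be an integer and let ω ∈ W^{1,1}(−1,1). Let P⁻ (resp. P⁺) be a polynomial of degree at most p satisfying ∫_{−1}^{1}(P^± − ω)v dξ = 0 for every polynomial v of degree at most p−1, together with P⁻(1) = ω(1) (resp. P⁺(−1) = ω(−1)). Then ‖ω − P⁻‖²_{L²(−1,1)} = ‖ω − Π_p ω‖²_{L²(−1,1)} + (2/(2p+1))·(ω̂′_p/(2p+1) + ω̂′_{p+1}/(2p+3))², and ‖ω − P⁺‖²_{L²(−1,1)} = ‖ω − Π_p ω‖²_{L²(−1,1)} + (2/(2p+1))·(ω̂′_p/(2p+1) − ω̂′_{p+1}/(2p+3))², where ω̂′_n denotes the n-th Legendre coefficient of ω′. -/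
open MeasureTheory Set

/-- The Legendre polynomial of degree `n` via Rodrigues' formula. -/
noncomputable def legendre (n : ℕ) (x : ℝ) : ℝ :=
  (1 / ((2 : ℝ) ^ n * (Nat.factorial n : ℝ))) *
    iteratedDeriv n (fun y : ℝ => (y ^ 2 - 1) ^ n) x

/-- The `n`-th Legendre coefficient of `f`. -/
noncomputable def legCoeff (f : ℝ → ℝ) (n : ℕ) : ℝ :=
  ((2 * (n : ℝ) + 1) / 2) * ∫ x in (-1 : ℝ)..1, f x * legendre n x

/-- The truncated Legendre expansion `Π_p f`. -/
noncomputable def legProj (p : ℕ) (f : ℝ → ℝ) (x : ℝ) : ℝ :=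
  ∑ n ∈ Finset.range (p + 1), legCoeff f n * legendre n x

open Polynomial
/-- polynomial version of `(X^2-1)^n` -/
noncomputable def legU (n : ℕ) : Polynomial ℝ := ((X : Polynomial ℝ) ^ 2 - 1) ^ n

/-- polynomial Legendre -/
noncomputable def legPoly (n : ℕ) : Polynomial ℝ :=
  C (1 / ((2 : ℝ) ^ n * (Nat.factorial n : ℝ))) * derivative^[n] (legU n)

lemma legC_ne (n : ℕ) : (1 / ((2 : ℝ) ^ n * (Nat.factorial n : ℝ))) ≠ 0 := by
  positivity

lemma iteratedDeriv_polyeval (q : Polynomial ℝ) (k : ℕ) (x : ℝ) :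
    iteratedDeriv k (fun y : ℝ => eval y q) x = eval x (derivative^[k] q) := by
  induction k generalizing x with
  | zero => simp
  | succ k ih =>
    rw [iteratedDeriv_succ]
    have : iteratedDeriv k (fun y : ℝ => eval y q) = fun y => eval y (derivative^[k] q) :=
      funext fun y => ih y
    rw [this, Function.iterate_succ_apply']
    exact Polynomial.deriv _

lemma legendre_eq (n : ℕ) (x : ℝ) : legendre n x = eval x (legPoly n) := by
  have h : (fun y : ℝ => (y ^ 2 - 1) ^ n) = fun y : ℝ => eval y (legU n) := by
    funext y; simp [legU]
  rw [legendre, legPoly, h, iteratedDeriv_polyeval]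
  simp [mul_comm]

lemma legPoly_zero : legPoly 0 = 1 := by
  simp [legPoly, legU]

lemma legPoly_one : legPoly 1 = X := by
  have h : derivative^[1] (legU 1) = C 2 * X := by
    simp [legU, derivative_sub, derivative_X_pow]
    rw [one_add_one_eq_two]; exact (map_ofNat C 2).symm
  rw [legPoly, h, ← mul_assoc, ← C_mul]
  norm_num

lemma legU_monic (n : ℕ) : (legU n).Monic := by
  have := (monic_X_pow_sub_C (1 : ℝ) (two_ne_zero)).pow (n := n)
  simpa [legU] using this

lemma legU_natDegree (n : ℕ) : (legU n).natDegree = 2 * n := by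
  have h2 : ((X : Polynomial ℝ) ^ 2 - 1).natDegree = 2 := by
    have := natDegree_X_pow_sub_C (R := ℝ) (n := 2) (r := 1)
    simpa using this
  rw [legU, natDegree_pow, h2, mul_comm]

lemma legU_iter_coeff (n : ℕ) :
    (derivative^[n] (legU n)).coeff n = ((2 * n).descFactorial n : ℝ) := by
  rw [coeff_iterate_derivative]
  have h : (legU n).coeff (n + n) = 1 := by
    have := (legU_monic n).leadingCoeff
    rwa [leadingCoeff, legU_natDegree, two_mul] at this
  rw [h, nsmul_eq_mul, mul_one, two_mul]

lemma legPoly_coeff_ne (n : ℕ) : (legPoly n).coeff n ≠ 0 := by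
  rw [legPoly, coeff_C_mul, legU_iter_coeff]
  apply mul_ne_zero (legC_ne n)
  have : (2 * n).descFactorial n ≠ 0 := by
    rw [Ne, Nat.descFactorial_eq_zero_iff_lt]; omega
  exact_mod_cast this

lemma legPoly_natDegree (n : ℕ) : (legPoly n).natDegree = n := by
  apply le_antisymm
  · rw [legPoly, natDegree_C_mul (legC_ne n)]
    have := natDegree_iterate_derivative (legU n) n
    rw [legU_natDegree] at this
    omega
  · exact le_natDegree_of_ne_zero (legPoly_coeff_ne n)

lemma iter_shift (q : Polynomial ℝ) (k : ℕ) :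
    derivative (derivative^[k] q) = derivative^[k+1] q :=
  (Function.iterate_succ_apply' _ _ _).symm

lemma iter_deriv_X_mul (q : Polynomial ℝ) (k : ℕ) :
    derivative^[k+1] (X * q) =
      X * derivative^[k+1] q + ((k : Polynomial ℝ) + 1) * derivative^[k] q := by
  induction k with
  | zero =>
    show derivative (X * q) = _
    simp only [derivative_mul, derivative_X, Function.iterate_zero_apply,
      show derivative^[0+1] q = derivative q from rfl]
    push_cast
    try simp only [map_ofNat, C_1, derivative_ofNat]
    ring
  | succ k ih =>
    rw [Function.iterate_succ_apply', ih]
    simp only [derivative_add, derivative_mul, derivative_X, derivative_natCast,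
      derivative_one, iter_shift, show k+1+1 = k+2 from rfl]
    push_cast
    try simp only [map_ofNat, C_1, derivative_ofNat]
    ring

lemma iter_deriv_sqsub_mul (q : Polynomial ℝ) (k : ℕ) :
    derivative^[k+2] ((X^2 - 1) * q) =
      (X^2 - 1) * derivative^[k+2] q
        + (2 * ((k : Polynomial ℝ) + 2)) * (X * derivative^[k+1] q)
        + (((k : Polynomial ℝ) + 2) * ((k : Polynomial ℝ) + 1)) * derivative^[k] q := by
  induction k with
  | zero =>
    show derivative (derivative ((X^2-1) * q)) = _
    simp only [derivative_mul, derivative_add, derivative_sub, derivative_X_pow,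
      derivative_one, derivative_X, C_eq_natCast, Nat.cast_ofNat, C_1, derivative_zero,
      show derivative^[(0:ℕ)+2] q = derivative (derivative q) from rfl,
      show derivative^[(0:ℕ)+1] q = derivative q from rfl, Function.iterate_zero_apply]
    push_cast
    try simp only [map_ofNat, C_1, derivative_ofNat]
    ring
  | succ k ih =>
    rw [Function.iterate_succ_apply', ih]
    simp only [derivative_add, derivative_mul, derivative_sub, derivative_X_pow,
      derivative_one, derivative_X, derivative_natCast, derivative_ofNat, iter_shift,
      C_eq_natCast, Nat.cast_ofNat, C_1, derivative_zero,
      show k+1+1 = k+2 from rfl, show k+2+1 = k+3 from rfl, show k+1+2 = k+3 from rfl]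
    push_cast
    try simp only [map_ofNat, C_1, derivative_ofNat]
    ring

lemma legU_deriv_succ (n : ℕ) :
    derivative (legU (n+1)) = ((2*n+2 : ℕ) : Polynomial ℝ) * (X * legU n) := by
  simp only [legU, derivative_pow, derivative_sub, derivative_X_pow, derivative_one, derivative_X,
    C_eq_natCast]
  push_cast
  try simp only [map_ofNat]
  ring

lemma iter_legU_succ (n : ℕ) :
    derivative^[n+2] (legU (n+1)) =
      ((2*n+2 : ℕ) : Polynomial ℝ) *
        (X * derivative^[n+1] (legU n) + ((n : Polynomial ℝ) + 1) * derivative^[n] (legU n)) := by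
  have h : derivative^[n+2] (legU (n+1)) = derivative^[n+1] (derivative (legU (n+1))) := by
    rw [← Function.iterate_succ_apply]
  rw [h, legU_deriv_succ, Polynomial.iterate_derivative_natCast_mul, iter_deriv_X_mul]

lemma Cfact_mul (n : ℕ) :
    C (1 / ((2:ℝ)^(n+1) * ((n+1).factorial : ℝ))) * ((2*n+2 : ℕ) : Polynomial ℝ)
      = C (1 / ((2:ℝ)^n * (n.factorial : ℝ))) := by
  rw [← C_eq_natCast, ← C_mul]
  congr 1
  have h2 : (2:ℝ)^n ≠ 0 := by positivity
  have hf : (n.factorial : ℝ) ≠ 0 := Nat.cast_ne_zero.mpr n.factorial_ne_zero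
  rw [Nat.factorial_succ, pow_succ]
  push_cast
  field_simp

lemma legPoly_deriv_succ (n : ℕ) :
    derivative (legPoly (n+1)) =
      X * derivative (legPoly n) + ((n : Polynomial ℝ) + 1) * legPoly n := by
  rw [legPoly, derivative_C_mul, iter_shift, iter_legU_succ, ← mul_assoc, Cfact_mul,
    legPoly, derivative_C_mul, iter_shift]
  ring

lemma legU_sq_deriv (n : ℕ) :
    (X^2 - 1) * derivative (legU (n+1)) = ((2*n+2 : ℕ) : Polynomial ℝ) * (X * legU (n+1)) := by
  rw [legU_deriv_succ]
  have h : legU (n+1) = (X^2-1) * legU n := by rw [legU, legU, pow_succ]; ring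
  rw [h]; ring

lemma legU_ODE (n : ℕ) :
    (X^2-1) * derivative^[n+3] (legU (n+1)) + 2 * X * derivative^[n+2] (legU (n+1))
      = (((n:Polynomial ℝ)+1) * ((n:Polynomial ℝ)+2)) * derivative^[n+1] (legU (n+1)) := by
  have h := congrArg (derivative^[n+2]) (legU_sq_deriv n)
  rw [iter_deriv_sqsub_mul, Polynomial.iterate_derivative_natCast_mul, iter_deriv_X_mul] at h
  simp only [← Function.iterate_succ_apply derivative, show n+2+1 = n+3 from rfl,
    show n+1+1 = n+2 from rfl] at h
  push_cast at h ⊢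
  linear_combination h

lemma legPoly_ODE (n : ℕ) :
    derivative ((X^2 - 1) * derivative (legPoly n)) =
      ((n : Polynomial ℝ) * ((n : Polynomial ℝ)+1)) * legPoly n := by
  cases n with
  | zero => simp [legPoly_zero]
  | succ m =>
    rw [legPoly, derivative_C_mul, iter_shift, mul_left_comm, derivative_C_mul, derivative_mul,
      iter_shift]
    simp only [derivative_sub, derivative_X_pow, derivative_one, C_eq_natCast,
      show m+1+1 = m+2 from rfl, show m+2+1 = m+3 from rfl]
    push_cast
    try simp only [map_ofNat]
    linear_combination (C (1 / ((2:ℝ)^(m+1) * ((m+1).factorial : ℝ)))) * legU_ODE m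

lemma poly_eq_of_deriv_eq {p q : Polynomial ℝ} (h : derivative p = derivative q)
    (h1 : eval 1 p = eval 1 q) : p = q := by
  have hd : derivative (p - q) = 0 := by rw [derivative_sub, h, sub_self]
  have h0 := Polynomial.eq_C_of_natDegree_le_zero
    (le_of_eq (Polynomial.natDegree_eq_zero_of_derivative_eq_zero hd))
  have hv : eval 1 (p - q) = 0 := by rw [eval_sub, h1, sub_self]
  rw [h0, eval_C] at hv
  have h2 : p - q = 0 := by rw [h0, hv, map_zero]
  exact sub_eq_zero.mp h2

lemma legU_factored (n : ℕ) : legU n = (X - C 1)^n * (X + C 1)^n := by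
  rw [legU, ← mul_pow]
  congr 1
  rw [C_1]; ring

lemma legU_iter_eval_one (n : ℕ) :
    eval 1 (derivative^[n] (legU n)) = (n.factorial : ℝ) * 2^n := by
  rw [legU_factored, Polynomial.iterate_derivative_mul, eval_finset_sum]
  rw [Finset.sum_eq_single 0]
  · simp only [Nat.choose_zero_right, one_smul, Nat.sub_zero, Function.iterate_zero_apply,
      Polynomial.iterate_derivative_X_sub_pow_self, eval_mul, eval_natCast, eval_pow,
      eval_add, eval_X, eval_one]
    norm_num
  · intro k hk hk0
    have hkn : k ≤ n := Nat.lt_succ_iff.mp (Finset.mem_range.mp hk)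
    have he : n - (n - k) ≠ 0 := by omega
    rw [Polynomial.iterate_derivative_X_sub_pow]
    simp [zero_pow he]
  · simp

lemma legU_iter_eval_negone (n : ℕ) :
    eval (-1) (derivative^[n] (legU n)) = ((-2):ℝ)^n * (n.factorial : ℝ) := by
  rw [legU_factored, Polynomial.iterate_derivative_mul, eval_finset_sum]
  rw [Finset.sum_eq_single n]
  · simp only [Nat.choose_self, one_smul, Nat.sub_self, Function.iterate_zero_apply,
      Polynomial.iterate_derivative_X_add_pow, Nat.descFactorial_self, pow_zero, smul_eq_mul,
      nsmul_eq_mul, mul_one, eval_mul, eval_natCast, eval_pow, eval_sub, eval_X, eval_one]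
    norm_num
  · intro k hk hk0
    have hkn : k ≤ n := Nat.lt_succ_iff.mp (Finset.mem_range.mp hk)
    have he : n - k ≠ 0 := by omega
    rw [Polynomial.iterate_derivative_X_add_pow]
    simp [zero_pow he]
  · simp

lemma legPoly_eval_one (n : ℕ) : eval 1 (legPoly n) = 1 := by
  rw [legPoly, eval_mul, eval_C, legU_iter_eval_one]
  have hf : (n.factorial : ℝ) ≠ 0 := Nat.cast_ne_zero.mpr n.factorial_ne_zero
  have h2 : (2:ℝ)^n ≠ 0 := by positivity
  field_simp

lemma legPoly_eval_negone (n : ℕ) : eval (-1) (legPoly n) = (-1)^n := by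
  rw [legPoly, eval_mul, eval_C, legU_iter_eval_negone]
  have hf : (n.factorial : ℝ) ≠ 0 := Nat.cast_ne_zero.mpr n.factorial_ne_zero
  have h2 : (2:ℝ)^n ≠ 0 := by positivity
  rw [show ((-2):ℝ)^n = (-1)^n * 2^n by rw [← neg_one_mul, mul_pow]]
  field_simp

lemma legPoly_dagger (n : ℕ) :
    (X^2 - 1) * derivative (legPoly n) =
      ((n : Polynomial ℝ) + 1) * (legPoly (n+1) - X * legPoly n) := by
  apply poly_eq_of_deriv_eq
  · rw [legPoly_ODE]
    simp only [derivative_mul, derivative_sub, derivative_natCast, derivative_one,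
      derivative_add, derivative_X]
    rw [legPoly_deriv_succ]
    push_cast
    ring
  · simp [legPoly_eval_one]

lemma legPoly_starstar (n : ℕ) :
    X * derivative (legPoly (n+1)) =
      derivative (legPoly n) + ((n : Polynomial ℝ) + 1) * legPoly (n+1) := by
  have h1 := legPoly_deriv_succ n
  have h2 := legPoly_dagger n
  linear_combination X * h1 + h2

lemma legPoly_threeterm (n : ℕ) :
    ((n : Polynomial ℝ) + 2) * legPoly (n+2) =
      (2*(n : Polynomial ℝ) + 3) * (X * legPoly (n+1)) - ((n : Polynomial ℝ)+1) * legPoly n := by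
  apply poly_eq_of_deriv_eq
  · simp only [derivative_mul, derivative_sub, derivative_add, derivative_natCast,
      derivative_one, derivative_X, derivative_ofNat]
    have h1 := legPoly_deriv_succ (n+1)
    have h2 := legPoly_starstar n
    push_cast at h1 h2 ⊢
    linear_combination ((n:Polynomial ℝ)+2) * h1 - ((n:Polynomial ℝ)+1) * h2
  · simp [legPoly_eval_one]
    push_cast
    ring

lemma legPoly_key (n : ℕ) :
    (2*(n : Polynomial ℝ) + 3) * ((X^2 - 1) * derivative (legPoly (n+1))) =
      (((n : Polynomial ℝ)+1) * ((n : Polynomial ℝ)+2)) * (legPoly (n+2) - legPoly n) := by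
  have h1 := legPoly_dagger (n+1)
  have h2 := legPoly_threeterm n
  push_cast at h1 h2
  linear_combination (2*(n:Polynomial ℝ)+3) * h1 + ((n:Polynomial ℝ)+2) * h2

/-! ### Integral layer -/

noncomputable def PI (q : Polynomial ℝ) : ℝ := ∫ x in (-1:ℝ)..1, eval x q

lemma poly_intable (q : Polynomial ℝ) :
    IntervalIntegrable (fun x => eval x q) volume (-1:ℝ) 1 :=
  (Polynomial.continuous q).intervalIntegrable _ _

lemma PI_add (q r : Polynomial ℝ) : PI (q + r) = PI q + PI r := by
  unfold PI
  simp only [eval_add]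
  exact intervalIntegral.integral_add (poly_intable q) (poly_intable r)

lemma PI_sub (q r : Polynomial ℝ) : PI (q - r) = PI q - PI r := by
  unfold PI
  simp only [eval_sub]
  exact intervalIntegral.integral_sub (poly_intable q) (poly_intable r)

lemma PI_C_mul (c : ℝ) (q : Polynomial ℝ) : PI (C c * q) = c * PI q := by
  unfold PI
  simp only [eval_mul, eval_C]
  exact intervalIntegral.integral_const_mul c _

lemma polyFTC (q : Polynomial ℝ) :
    PI (derivative q) = eval 1 q - eval (-1) q := by
  unfold PI
  exact intervalIntegral.integral_eq_sub_of_hasDerivAt (f := fun y => eval y q)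
    (fun x _ => q.hasDerivAt x) (poly_intable _)

lemma orth_aux (m n : ℕ) :
    derivative (((X^2-1) * derivative (legPoly n)) * legPoly m
        - ((X^2-1) * derivative (legPoly m)) * legPoly n)
      = C (((n:ℝ)*((n:ℝ)+1) - (m:ℝ)*((m:ℝ)+1))) * (legPoly n * legPoly m) := by
  rw [derivative_sub, derivative_mul (f := (X^2-1) * derivative (legPoly n)),
      derivative_mul (f := (X^2-1) * derivative (legPoly m)), legPoly_ODE, legPoly_ODE]
  simp only [map_sub, map_add, map_mul, map_one, C_eq_natCast]
  ring

lemma quad_ne {n m : ℕ} (h : n ≠ m) : ((n:ℝ)*((n:ℝ)+1) - (m:ℝ)*((m:ℝ)+1)) ≠ 0 := by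
  intro hc
  have h2 : ((n:ℝ) - m) * ((n:ℝ) + m + 1) = 0 := by linear_combination hc
  rcases mul_eq_zero.mp h2 with h3 | h3
  · exact h (Nat.cast_injective (by linarith : (n:ℝ) = m))
  · have hn : (0:ℝ) ≤ n := Nat.cast_nonneg n
    have hm : (0:ℝ) ≤ m := Nat.cast_nonneg m
    linarith

lemma legPoly_orth {n m : ℕ} (hmn : n ≠ m) : PI (legPoly n * legPoly m) = 0 := by
  have h := polyFTC (((X^2-1) * derivative (legPoly n)) * legPoly m
      - ((X^2-1) * derivative (legPoly m)) * legPoly n)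
  rw [orth_aux, PI_C_mul] at h
  have hb : eval 1 (((X^2-1) * derivative (legPoly n)) * legPoly m
      - ((X^2-1) * derivative (legPoly m)) * legPoly n) = 0 := by
    simp [eval_mul, eval_sub, eval_pow]
  have hb' : eval (-1) (((X^2-1) * derivative (legPoly n)) * legPoly m
      - ((X^2-1) * derivative (legPoly m)) * legPoly n) = 0 := by
    simp [eval_mul, eval_sub, eval_pow]
  rw [hb, hb'] at h
  have := quad_ne hmn
  have h0 : ((n:ℝ)*((n:ℝ)+1) - (m:ℝ)*((m:ℝ)+1)) * PI (legPoly n * legPoly m) = 0 := by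
    linarith
  exact (mul_eq_zero.mp h0).resolve_left this

noncomputable def legNorm (n : ℕ) : ℝ := PI (legPoly n * legPoly n)

lemma legNorm_zero : legNorm 0 = 2 := by
  unfold legNorm PI
  simp [legPoly_zero]
  norm_num

lemma legNorm_one : legNorm 1 = 2/3 := by
  unfold legNorm PI
  simp only [legPoly_one, eval_mul, eval_X]
  have hsq : ∀ x : ℝ, x * x = x ^ 2 := fun x => (sq x).symm
  simp only [hsq]
  rw [integral_pow]
  norm_num

lemma threeterm_C (m : ℕ) :
    C ((m:ℝ)+2) * legPoly (m+2) =
      C (2*(m:ℝ)+3) * (X * legPoly (m+1)) - C ((m:ℝ)+1) * legPoly m := by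
  simp only [map_add, map_mul, map_one, map_ofNat, C_eq_natCast]
  exact legPoly_threeterm m

lemma Jlem (m : ℕ) :
    (2*(m:ℝ)+3) * PI ((X * legPoly (m+1)) * legPoly m) = ((m:ℝ)+1) * legNorm m := by
  have h := congrArg (fun q => PI (q * legPoly m)) (threeterm_C m)
  rw [show (C ((m:ℝ)+2) * legPoly (m+2)) * legPoly m
      = C ((m:ℝ)+2) * (legPoly (m+2) * legPoly m) by ring,
    show (C (2*(m:ℝ)+3) * (X * legPoly (m+1)) - C ((m:ℝ)+1) * legPoly m) * legPoly m
      = C (2*(m:ℝ)+3) * ((X * legPoly (m+1)) * legPoly m)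
        - C ((m:ℝ)+1) * (legPoly m * legPoly m) by ring,
    PI_sub, PI_C_mul, PI_C_mul, PI_C_mul, legPoly_orth (by omega : m+2 ≠ m)] at h
  unfold legNorm
  linarith

lemma legNorm_step (m : ℕ) :
    (2*(m:ℝ)+5) * (((m:ℝ)+2) * legNorm (m+2)) = (2*(m:ℝ)+3) * (((m:ℝ)+2) * legNorm (m+1)) := by
  have h := congrArg (fun q => PI (q * legPoly (m+2))) (threeterm_C m)
  rw [show (C ((m:ℝ)+2) * legPoly (m+2)) * legPoly (m+2)
      = C ((m:ℝ)+2) * (legPoly (m+2) * legPoly (m+2)) by ring,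
    show (C (2*(m:ℝ)+3) * (X * legPoly (m+1)) - C ((m:ℝ)+1) * legPoly m) * legPoly (m+2)
      = C (2*(m:ℝ)+3) * ((X * legPoly (m+2)) * legPoly (m+1))
        - C ((m:ℝ)+1) * (legPoly m * legPoly (m+2)) by ring,
    PI_sub, PI_C_mul, PI_C_mul, PI_C_mul, legPoly_orth (by omega : m ≠ m+2)] at h
  have hJ := Jlem (m+1)
  push_cast at hJ
  -- h : (m+2) * legNorm (m+2) = (2m+3) * PI (X*L_{m+2}*L_{m+1}) - (m+1)*0
  unfold legNorm at *
  nlinarith [h, hJ]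

lemma legNorm_val (n : ℕ) : legNorm n = 2/(2*(n:ℝ)+1) := by
  have key : ∀ k : ℕ, legNorm (k+1) = 2/(2*(k:ℝ)+3) := by
    intro k
    induction k with
    | zero => simpa using legNorm_one
    | succ m ih =>
      have h := legNorm_step m
      rw [ih] at h
      have h2 : (0:ℝ) < (m:ℝ)+2 := by positivity
      have hr : (2*(m:ℝ)+3)*(((m:ℝ)+2)*(2/(2*(m:ℝ)+3))) = ((m:ℝ)+2)*2 := by
        have : (2*(m:ℝ)+3) ≠ 0 := by positivity
        field_simp
      rw [hr] at h
      have h' : ((m:ℝ)+2) * ((2*(m:ℝ)+5) * legNorm (m+2)) = ((m:ℝ)+2) * 2 := by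
        linear_combination h
      have h'' := mul_left_cancel₀ (ne_of_gt h2) h'
      rw [show m+1+1 = m+2 from rfl]
      push_cast
      rw [show 2*((m:ℝ)+1)+3 = 2*(m:ℝ)+5 by ring, eq_div_iff (by positivity : (2*(m:ℝ)+5) ≠ 0)]
      linarith
  cases n with
  | zero => simpa using legNorm_zero
  | succ k => rw [key k]; push_cast; ring_nf

/-! ### Representation of polynomials in the Legendre basis -/

lemma legPoly_repr : ∀ (n : ℕ) (q : Polynomial ℝ), q.natDegree ≤ n →
    ∃ d : ℕ → ℝ, q = ∑ i ∈ Finset.range (n+1), C (d i) * legPoly i := by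
  intro n
  induction n with
  | zero =>
    intro q hq
    refine ⟨fun _ => q.coeff 0, ?_⟩
    rw [Polynomial.eq_C_of_natDegree_le_zero hq]
    simp [legPoly_zero]
  | succ n ih =>
    intro q hq
    set c := q.coeff (n+1) / (legPoly (n+1)).coeff (n+1) with hc
    have hr : (q - C c * legPoly (n+1)).natDegree ≤ n := by
      rw [Polynomial.natDegree_le_iff_coeff_eq_zero]
      intro N hN
      rcases Nat.lt_or_ge (n+1) N with h | h
      · rw [coeff_sub, coeff_C_mul,
          Polynomial.coeff_eq_zero_of_natDegree_lt (lt_of_le_of_lt hq h),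
          Polynomial.coeff_eq_zero_of_natDegree_lt (by rw [legPoly_natDegree]; exact h)]
        ring
      · have hN1 : N = n+1 := by omega
        subst hN1
        rw [coeff_sub, coeff_C_mul, hc, div_mul_cancel₀ _ (legPoly_coeff_ne (n+1)), sub_self]
    obtain ⟨d, hd⟩ := ih _ hr
    refine ⟨Function.update d (n+1) c, ?_⟩
    rw [Finset.sum_range_succ, Function.update_self]
    have hsum : ∑ i ∈ Finset.range (n+1), C (Function.update d (n+1) c i) * legPoly i
        = ∑ i ∈ Finset.range (n+1), C (d i) * legPoly i := by
      apply Finset.sum_congr rfl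
      intro i hi
      have : i ≠ n+1 := by have := Finset.mem_range.mp hi; omega
      rw [Function.update_of_ne this]
    rw [hsum, ← hd]
    ring

lemma repr_integral (p n : ℕ) (d : ℕ → ℝ) (hnp : n ≤ p) :
    PI ((∑ i ∈ Finset.range (p+1), C (d i) * legPoly i) * legPoly n) = d n * legNorm n := by
  rw [Finset.sum_mul]
  have hsum : PI (∑ i ∈ Finset.range (p+1), (C (d i) * legPoly i) * legPoly n)
      = ∑ i ∈ Finset.range (p+1), PI ((C (d i) * legPoly i) * legPoly n) := by
    unfold PI
    simp only [eval_finset_sum]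
    exact intervalIntegral.integral_finset_sum (fun i _ => poly_intable _)
  rw [hsum, Finset.sum_eq_single n]
  · rw [mul_assoc, PI_C_mul]; rfl
  · intro i hi hin
    rw [mul_assoc, PI_C_mul, legPoly_orth hin, mul_zero]
  · intro hn
    exact absurd (Finset.mem_range.mpr (by omega)) hn

/-! ### Integration by parts for `ω` -/

section omegaSec

variable {ω dω : ℝ → ℝ}

lemma omega_intable (hcont : ContinuousOn ω (Set.Icc (-1 : ℝ) 1)) (q : Polynomial ℝ) :
    IntervalIntegrable (fun x => ω x * eval x q) volume (-1:ℝ) 1 := by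
  apply ContinuousOn.intervalIntegrable
  rw [uIcc_of_le (by norm_num : (-1:ℝ) ≤ 1)]
  exact hcont.mul (Polynomial.continuous q).continuousOn

lemma domega_intable (hint : IntervalIntegrable dω volume (-1) 1) (q : Polynomial ℝ) :
    IntervalIntegrable (fun x => dω x * eval x q) volume (-1:ℝ) 1 :=
  hint.mul_continuousOn (Polynomial.continuous q).continuousOn

lemma omega_IBP (hcont : ContinuousOn ω (Set.Icc (-1 : ℝ) 1))
    (hderiv : ∀ x ∈ Set.Ioo (-1 : ℝ) 1, HasDerivAt ω (dω x) x)
    (hint : IntervalIntegrable dω volume (-1) 1) (q : Polynomial ℝ) :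
    ∫ x in (-1:ℝ)..1, dω x * eval x q
      = ω 1 * eval 1 q - ω (-1) * eval (-1) q
        - ∫ x in (-1:ℝ)..1, ω x * eval x (derivative q) := by
  have key : ∫ x in (-1:ℝ)..1, (dω x * eval x q + ω x * eval x (derivative q))
      = ω 1 * eval 1 q - ω (-1) * eval (-1) q := by
    apply intervalIntegral.integral_eq_sub_of_hasDerivAt_of_le (by norm_num)
      (hcont.mul (Polynomial.continuous q).continuousOn)
    · intro x hx
      exact (hderiv x hx).mul (q.hasDerivAt x)
    · exact (domega_intable hint q).add (omega_intable hcont (derivative q))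
  rw [intervalIntegral.integral_add (domega_intable hint q)
    (omega_intable hcont (derivative q))] at key
  linarith

lemma omega_rec (hcont : ContinuousOn ω (Set.Icc (-1 : ℝ) 1))
    (hderiv : ∀ x ∈ Set.Ioo (-1 : ℝ) 1, HasDerivAt ω (dω x) x)
    (hint : IntervalIntegrable dω volume (-1) 1) (m : ℕ) :
    (2*(m:ℝ)+3) * (∫ x in (-1:ℝ)..1, ω x * eval x (legPoly (m+1)))
      = (∫ x in (-1:ℝ)..1, dω x * eval x (legPoly m))
        - (∫ x in (-1:ℝ)..1, dω x * eval x (legPoly (m+2))) := by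
  have hc2 : (((m:ℝ)+1)*((m:ℝ)+2)) ≠ 0 := by positivity
  set q : Polynomial ℝ := (X^2-1) * derivative (legPoly (m+1)) with hq
  have hODE : derivative q = C (((m:ℝ)+1)*((m:ℝ)+2)) * legPoly (m+1) := by
    have h := legPoly_ODE (m+1)
    push_cast at h
    rw [hq]
    simp only [map_mul, map_add, map_one, map_ofNat, C_eq_natCast]
    linear_combination h
  have hkey : C (2*(m:ℝ)+3) * q = C (((m:ℝ)+1)*((m:ℝ)+2)) * (legPoly (m+2) - legPoly m) := by
    have h := legPoly_key m
    push_cast at h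
    rw [hq]
    simp only [map_mul, map_add, map_one, map_ofNat, C_eq_natCast]
    linear_combination h
  have hb1 : eval 1 q = 0 := by rw [hq]; simp
  have hb2 : eval (-1) q = 0 := by rw [hq]; simp
  have hIBP := omega_IBP hcont hderiv hint q
  rw [hb1, hb2] at hIBP
  have hder_int : (∫ x in (-1:ℝ)..1, ω x * eval x (derivative q))
      = (((m:ℝ)+1)*((m:ℝ)+2)) * ∫ x in (-1:ℝ)..1, ω x * eval x (legPoly (m+1)) := by
    rw [hODE]
    simp only [eval_mul, eval_C]
    rw [← intervalIntegral.integral_const_mul]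
    congr 1; funext x; ring
  rw [hder_int] at hIBP
  have hsc : (2*(m:ℝ)+3) * (∫ x in (-1:ℝ)..1, dω x * eval x q)
      = (((m:ℝ)+1)*((m:ℝ)+2)) * ((∫ x in (-1:ℝ)..1, dω x * eval x (legPoly (m+2)))
          - (∫ x in (-1:ℝ)..1, dω x * eval x (legPoly m))) := by
    have hsplit : (∫ x in (-1:ℝ)..1, (dω x * eval x (legPoly (m+2)) - dω x * eval x (legPoly m)))
        = (∫ x in (-1:ℝ)..1, dω x * eval x (legPoly (m+2)))
          - (∫ x in (-1:ℝ)..1, dω x * eval x (legPoly m)) :=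
      intervalIntegral.integral_sub (domega_intable hint _) (domega_intable hint _)
    calc (2*(m:ℝ)+3) * (∫ x in (-1:ℝ)..1, dω x * eval x q)
        = ∫ x in (-1:ℝ)..1, (2*(m:ℝ)+3) * (dω x * eval x q) :=
          (intervalIntegral.integral_const_mul _ _).symm
      _ = ∫ x in (-1:ℝ)..1, (((m:ℝ)+1)*((m:ℝ)+2))
            * (dω x * eval x (legPoly (m+2)) - dω x * eval x (legPoly m)) := by
          congr 1; funext x
          have hx := congrArg (eval x) hkey
          simp only [eval_mul, eval_C, eval_sub] at hx
          linear_combination dω x * hx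
      _ = (((m:ℝ)+1)*((m:ℝ)+2)) * ((∫ x in (-1:ℝ)..1, dω x * eval x (legPoly (m+2)))
            - (∫ x in (-1:ℝ)..1, dω x * eval x (legPoly m))) := by
          rw [intervalIntegral.integral_const_mul, hsplit]
  apply mul_left_cancel₀ hc2
  linear_combination (2*(m:ℝ)+3) * hIBP - hsc

lemma omega_B1 (hcont : ContinuousOn ω (Set.Icc (-1 : ℝ) 1))
    (hderiv : ∀ x ∈ Set.Ioo (-1 : ℝ) 1, HasDerivAt ω (dω x) x)
    (hint : IntervalIntegrable dω volume (-1) 1) :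
    (∫ x in (-1:ℝ)..1, dω x * eval x (legPoly 0)) + (∫ x in (-1:ℝ)..1, dω x * eval x (legPoly 1))
      = 2 * ω 1 - (∫ x in (-1:ℝ)..1, ω x * eval x (legPoly 0)) := by
  have h := omega_IBP hcont hderiv hint (legPoly 1 + legPoly 0)
  have hder : derivative (legPoly 1 + legPoly 0) = legPoly 0 := by
    rw [legPoly_zero, legPoly_one]; simp
  rw [hder, legPoly_zero, legPoly_one] at h
  simp only [eval_add, eval_X, eval_one] at h
  have hsplit : (∫ x in (-1:ℝ)..1, dω x * (eval x (legPoly 1) + eval x (legPoly 0)))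
      = (∫ x in (-1:ℝ)..1, dω x * eval x (legPoly 1))
        + (∫ x in (-1:ℝ)..1, dω x * eval x (legPoly 0)) := by
    rw [← intervalIntegral.integral_add (domega_intable hint _) (domega_intable hint _)]
    congr 1; funext x; ring
  simp only [legPoly_zero, legPoly_one, eval_X, eval_one] at hsplit
  rw [hsplit] at h
  simp only [legPoly_zero, legPoly_one, eval_X, eval_one]
  linarith

lemma omega_B2 (hcont : ContinuousOn ω (Set.Icc (-1 : ℝ) 1))
    (hderiv : ∀ x ∈ Set.Ioo (-1 : ℝ) 1, HasDerivAt ω (dω x) x)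
    (hint : IntervalIntegrable dω volume (-1) 1) :
    (∫ x in (-1:ℝ)..1, dω x * eval x (legPoly 0)) - (∫ x in (-1:ℝ)..1, dω x * eval x (legPoly 1))
      = (∫ x in (-1:ℝ)..1, ω x * eval x (legPoly 0)) - 2 * ω (-1) := by
  have h := omega_IBP hcont hderiv hint (legPoly 0 - legPoly 1)
  have hder : derivative (legPoly 0 - legPoly 1) = - legPoly 0 := by
    rw [legPoly_zero, legPoly_one]; simp
  rw [hder, legPoly_zero, legPoly_one] at h
  simp only [eval_sub, eval_neg, eval_X, eval_one] at h
  have hsplit : (∫ x in (-1:ℝ)..1, dω x * (eval x (legPoly 0) - eval x (legPoly 1)))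
      = (∫ x in (-1:ℝ)..1, dω x * eval x (legPoly 0))
        - (∫ x in (-1:ℝ)..1, dω x * eval x (legPoly 1)) := by
    rw [← intervalIntegral.integral_sub (domega_intable hint _) (domega_intable hint _)]
    congr 1; funext x; ring
  simp only [legPoly_zero, legPoly_one, eval_X, eval_one] at hsplit
  rw [hsplit] at h
  have hneg : (∫ x in (-1:ℝ)..1, ω x * -(1:ℝ)) = - ∫ x in (-1:ℝ)..1, ω x * 1 := by
    rw [← intervalIntegral.integral_neg]
    congr 1; funext x; ring
  rw [hneg] at h
  simp only [legPoly_zero, legPoly_one, eval_X, eval_one]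
  linarith

end omegaSec

/-! ### telescoping -/

lemma telescope1 (c A : ℕ → ℝ) (w : ℝ)
    (hrec : ∀ m, c (m+1) = A m - A (m+2)) (hb : A 0 + A 1 = w - c 0) :
    ∀ p, ∑ n ∈ Finset.range (p+1), c n = w - (A p + A (p+1)) := by
  intro p
  induction p with
  | zero =>
    simp only [Finset.sum_range_succ, Finset.sum_range_zero, zero_add]
    linarith
  | succ q ih => rw [Finset.sum_range_succ, ih, hrec]; ring

lemma telescope2 (c A : ℕ → ℝ) (w : ℝ)
    (hrec : ∀ m, c (m+1) = A m - A (m+2)) (hb : A 0 - A 1 = c 0 - w) :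
    ∀ p, ∑ n ∈ Finset.range (p+1), (-1:ℝ)^n * c n = w + (-1)^p * (A p - A (p+1)) := by
  intro p
  induction p with
  | zero =>
    simp only [Finset.sum_range_succ, Finset.sum_range_zero, pow_zero, one_mul, zero_add]
    linarith
  | succ q ih =>
    rw [Finset.sum_range_succ, ih, hrec, pow_succ]
    ring

/-! ### Main auxiliary lemma -/

lemma hIw_eq {ω : ℝ → ℝ} (n : ℕ) :
    (∫ x in (-1:ℝ)..1, ω x * eval x (legPoly n)) = (2/(2*(n:ℝ)+1)) * legCoeff ω n := by
  rw [legCoeff]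
  rw [show (∫ x in (-1:ℝ)..1, ω x * legendre n x)
      = ∫ x in (-1:ℝ)..1, ω x * eval x (legPoly n) by
    congr 1; funext x; rw [legendre_eq]]
  have hne : (2*(n:ℝ)+1) ≠ 0 := by positivity
  field_simp

lemma main_aux {ω : ℝ → ℝ} (hcont : ContinuousOn ω (Set.Icc (-1 : ℝ) 1))
    (p : ℕ) (P : Polynomial ℝ) (hdeg : P.natDegree ≤ p)
    (horth : ∀ v : Polynomial ℝ, v.natDegree < p →
        ∫ x in (-1 : ℝ)..1, (eval x P - ω x) * eval x v = 0) :
    ∃ e : ℝ,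
      (∀ x : ℝ, ω x - eval x P = (ω x - legProj p ω x) + e * eval x (legPoly p)) ∧
      (∫ x in (-1 : ℝ)..1, (ω x - eval x P) ^ 2)
        = (∫ x in (-1 : ℝ)..1, (ω x - legProj p ω x) ^ 2) + e^2 * (2/(2*(p:ℝ)+1)) := by
  obtain ⟨d, hd⟩ := legPoly_repr p P hdeg
  set Qp : Polynomial ℝ := ∑ i ∈ Finset.range (p+1), C (legCoeff ω i) * legPoly i with hQp
  have hproj : ∀ x, legProj p ω x = eval x Qp := by
    intro x
    rw [hQp, eval_finset_sum, legProj]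
    apply Finset.sum_congr rfl
    intro i _
    rw [eval_mul, eval_C, legendre_eq]
  have hdm : ∀ m, m < p → d m = legCoeff ω m := by
    intro m hm
    have h0 := horth (legPoly m) (by rw [legPoly_natDegree]; exact hm)
    have hsplit : (∫ x in (-1:ℝ)..1, (eval x P - ω x) * eval x (legPoly m))
        = PI (P * legPoly m) - ∫ x in (-1:ℝ)..1, ω x * eval x (legPoly m) := by
      unfold PI
      rw [← intervalIntegral.integral_sub (poly_intable _) (omega_intable hcont _)]
      congr 1; funext x; simp only [eval_mul]; ring
    rw [hsplit] at h0
    rw [hd, repr_integral p m d (le_of_lt hm), legNorm_val, hIw_eq m] at h0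
    have hne : (2*(m:ℝ)+1) ≠ 0 := by positivity
    have h2 : (2/(2*(m:ℝ)+1)) ≠ 0 := by positivity
    have h3 : d m * (2/(2*(m:ℝ)+1)) = (2/(2*(m:ℝ)+1)) * legCoeff ω m := by linarith
    rw [mul_comm (d m) _] at h3
    exact mul_left_cancel₀ h2 h3
  set e : ℝ := legCoeff ω p - d p with he
  have hpt : ∀ x : ℝ, ω x - eval x P = (ω x - legProj p ω x) + e * eval x (legPoly p) := by
    intro x
    rw [hproj x, hQp, hd, eval_finset_sum, eval_finset_sum,
        Finset.sum_range_succ, Finset.sum_range_succ]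
    have hcg : ∀ i ∈ Finset.range p, eval x (C (d i) * legPoly i)
        = eval x (C (legCoeff ω i) * legPoly i) := by
      intro i hi
      rw [hdm i (Finset.mem_range.mp hi)]
    rw [Finset.sum_congr rfl hcg]
    simp only [eval_mul, eval_C]
    ring
  have hQpint : (∫ x in (-1:ℝ)..1, eval x Qp * eval x (legPoly p))
      = legCoeff ω p * legNorm p := by
    have : (∫ x in (-1:ℝ)..1, eval x Qp * eval x (legPoly p)) = PI (Qp * legPoly p) := by
      unfold PI; congr 1; funext x; rw [eval_mul]
    rw [this, hQp, repr_integral p p (legCoeff ω) le_rfl]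
  have hQpcont : Continuous (fun x : ℝ => eval x Qp) := Polynomial.continuous Qp
  have hprojeq : (fun x : ℝ => legProj p ω x) = fun x => eval x Qp := funext hproj
  have i2 : IntervalIntegrable (fun x => eval x Qp * eval x (legPoly p)) volume (-1:ℝ) 1 := by
    have := poly_intable (Qp * legPoly p)
    simpa [eval_mul] using this
  have hortho : (∫ x in (-1:ℝ)..1, (ω x - legProj p ω x) * eval x (legPoly p)) = 0 := by
    have hs : (∫ x in (-1:ℝ)..1, (ω x - legProj p ω x) * eval x (legPoly p))
        = (∫ x in (-1:ℝ)..1, ω x * eval x (legPoly p))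
          - (∫ x in (-1:ℝ)..1, eval x Qp * eval x (legPoly p)) := by
      rw [← intervalIntegral.integral_sub (omega_intable hcont _) i2]
      congr 1; funext x; rw [hproj x]; ring
    rw [hs, hQpint, hIw_eq p, legNorm_val]
    ring
  -- integrability of the three pieces
  have ia : IntervalIntegrable (fun x => (ω x - legProj p ω x)^2) volume (-1:ℝ) 1 := by
    simp only [hproj]
    apply ContinuousOn.intervalIntegrable
    rw [uIcc_of_le (by norm_num : (-1:ℝ) ≤ 1)]
    exact (hcont.sub hQpcont.continuousOn).pow 2
  have ib : IntervalIntegrable (fun x => (ω x - legProj p ω x) * eval x (legPoly p))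
      volume (-1:ℝ) 1 := by
    simp only [hproj]
    apply ContinuousOn.intervalIntegrable
    rw [uIcc_of_le (by norm_num : (-1:ℝ) ≤ 1)]
    exact (hcont.sub hQpcont.continuousOn).mul (Polynomial.continuous (legPoly p)).continuousOn
  have ic : IntervalIntegrable (fun x => eval x (legPoly p) * eval x (legPoly p))
      volume (-1:ℝ) 1 := by
    have := poly_intable (legPoly p * legPoly p)
    simpa [eval_mul] using this
  have hf3 : (∫ x in (-1:ℝ)..1, eval x (legPoly p) * eval x (legPoly p)) = 2/(2*(p:ℝ)+1) := by
    have h0 : (∫ x in (-1:ℝ)..1, eval x (legPoly p) * eval x (legPoly p))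
        = PI (legPoly p * legPoly p) := by
      unfold PI; congr 1; funext x; rw [eval_mul]
    rw [h0]
    exact legNorm_val p
  refine ⟨e, hpt, ?_⟩
  have hs1 : (∫ x in (-1:ℝ)..1, (ω x - eval x P)^2)
      = ∫ x in (-1:ℝ)..1, ((ω x - legProj p ω x)^2
          + ((2*e) * ((ω x - legProj p ω x) * eval x (legPoly p))
            + e^2 * (eval x (legPoly p) * eval x (legPoly p)))) := by
    congr 1; funext x; rw [hpt x]; ring
  rw [hs1, intervalIntegral.integral_add ia ((ib.const_mul (2*e)).add (ic.const_mul (e^2))),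
      intervalIntegral.integral_add (ib.const_mul (2*e)) (ic.const_mul (e^2)),
      intervalIntegral.integral_const_mul, intervalIntegral.integral_const_mul,
      hortho, hf3]
  ring


/-- the fundamental identities for the Gauss–Radau projections
`Π_p^-` (matching at `+1`) and `Π_p^+` (matching at `-1`) of `ω ∈ W^{1,1}(-1,1)`. -/
theorem stmt_1 (p : ℕ) (hp : 1 ≤ p) (ω dω : ℝ → ℝ)
    (hcont : ContinuousOn ω (Set.Icc (-1 : ℝ) 1))
    (hderiv : ∀ x ∈ Set.Ioo (-1 : ℝ) 1, HasDerivAt ω (dω x) x)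
    (hint : IntervalIntegrable dω volume (-1) 1)
    (hFTC : ∀ x ∈ Set.Icc (-1 : ℝ) 1, ω x = ω (-1) + ∫ t in (-1 : ℝ)..x, dω t)
    (Pm Pp : Polynomial ℝ)
    (hPmdeg : Pm.natDegree ≤ p)
    (hPmorth : ∀ v : Polynomial ℝ, v.natDegree < p →
        ∫ x in (-1 : ℝ)..1, (Pm.eval x - ω x) * v.eval x = 0)
    (hPmend : Pm.eval 1 = ω 1)
    (hPpdeg : Pp.natDegree ≤ p)
    (hPporth : ∀ v : Polynomial ℝ, v.natDegree < p →
        ∫ x in (-1 : ℝ)..1, (Pp.eval x - ω x) * v.eval x = 0)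
    (hPpend : Pp.eval (-1) = ω (-1)) :
    (∫ x in (-1 : ℝ)..1, (ω x - Pm.eval x) ^ 2) =
        (∫ x in (-1 : ℝ)..1, (ω x - legProj p ω x) ^ 2) +
          (2 / (2 * (p : ℝ) + 1)) *
            (legCoeff dω p / (2 * (p : ℝ) + 1) +
              legCoeff dω (p + 1) / (2 * (p : ℝ) + 3)) ^ 2 ∧
    (∫ x in (-1 : ℝ)..1, (ω x - Pp.eval x) ^ 2) =
        (∫ x in (-1 : ℝ)..1, (ω x - legProj p ω x) ^ 2) +
          (2 / (2 * (p : ℝ) + 1)) *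
            (legCoeff dω p / (2 * (p : ℝ) + 1) -
              legCoeff dω (p + 1) / (2 * (p : ℝ) + 3)) ^ 2 := by
  -- recurrence for Legendre coefficients
  have hrec : ∀ m : ℕ, legCoeff ω (m+1)
      = legCoeff dω m / (2*(m:ℝ)+1) - legCoeff dω (m+2) / (2*((m+2:ℕ):ℝ)+1) := by
    intro m
    have h := omega_rec hcont hderiv hint m
    rw [hIw_eq, hIw_eq, hIw_eq] at h
    have hcl : (2*(m:ℝ)+3) * ((2/(2*((m+1:ℕ):ℝ)+1)) * legCoeff ω (m+1))
        = 2 * legCoeff ω (m+1) := by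
      have hne : (2*(m:ℝ)+3) ≠ 0 := by positivity
      push_cast
      rw [show 2*((m:ℝ)+1)+1 = 2*(m:ℝ)+3 by ring]
      field_simp
    rw [hcl] at h
    push_cast at h ⊢
    linear_combination (1/2 : ℝ) * h
  have hb1 : legCoeff dω 0 / (2*((0:ℕ):ℝ)+1) + legCoeff dω 1 / (2*((1:ℕ):ℝ)+1)
      = ω 1 - legCoeff ω 0 := by
    have h := omega_B1 hcont hderiv hint
    rw [hIw_eq, hIw_eq, hIw_eq] at h
    norm_num at h ⊢
    linarith
  have hb2 : legCoeff dω 0 / (2*((0:ℕ):ℝ)+1) - legCoeff dω 1 / (2*((1:ℕ):ℝ)+1)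
      = legCoeff ω 0 - ω (-1) := by
    have h := omega_B2 hcont hderiv hint
    rw [hIw_eq, hIw_eq, hIw_eq] at h
    norm_num at h ⊢
    linarith
  have hS : ∀ q : ℕ, ∑ n ∈ Finset.range (q+1), legCoeff ω n
      = ω 1 - (legCoeff dω q / (2*(q:ℝ)+1) + legCoeff dω (q+1) / (2*((q+1:ℕ):ℝ)+1)) :=
    telescope1 (fun n => legCoeff ω n) (fun k => legCoeff dω k / (2*(k:ℝ)+1)) (ω 1)
      hrec (by linarith [hb1])
  have hT : ∀ q : ℕ, ∑ n ∈ Finset.range (q+1), (-1:ℝ)^n * legCoeff ω n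
      = ω (-1) + (-1:ℝ)^q * (legCoeff dω q / (2*(q:ℝ)+1)
          - legCoeff dω (q+1) / (2*((q+1:ℕ):ℝ)+1)) :=
    telescope2 (fun n => legCoeff ω n) (fun k => legCoeff dω k / (2*(k:ℝ)+1)) (ω (-1))
      hrec (by linarith [hb2])
  constructor
  · -- the `Π⁻` case
    obtain ⟨e, hpt, hI⟩ := main_aux hcont p Pm hPmdeg hPmorth
    have h1 := hpt 1
    rw [hPmend] at h1
    have hL1 : legProj p ω 1 = ∑ n ∈ Finset.range (p+1), legCoeff ω n := by
      rw [legProj]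
      apply Finset.sum_congr rfl
      intro n _
      rw [legendre_eq, legPoly_eval_one, mul_one]
    rw [hL1, legPoly_eval_one, hS p] at h1
    have he : e = -(legCoeff dω p / (2*(p:ℝ)+1) + legCoeff dω (p+1) / (2*((p+1:ℕ):ℝ)+1)) := by
      linarith
    rw [hI, he]
    push_cast
    ring
  · -- the `Π⁺` case
    obtain ⟨e, hpt, hI⟩ := main_aux hcont p Pp hPpdeg hPporth
    have h1 := hpt (-1)
    rw [hPpend] at h1
    have hL1 : legProj p ω (-1) = ∑ n ∈ Finset.range (p+1), (-1:ℝ)^n * legCoeff ω n := by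
      rw [legProj]
      apply Finset.sum_congr rfl
      intro n _
      rw [legendre_eq, legPoly_eval_negone]
      ring
    rw [hL1, legPoly_eval_negone, hT p] at h1
    have h2 : e * (-1:ℝ)^p = (legCoeff dω p / (2*(p:ℝ)+1)
        - legCoeff dω (p+1) / (2*((p+1:ℕ):ℝ)+1)) * (-1:ℝ)^p := by
      linear_combination -h1
    have he : e = legCoeff dω p / (2*(p:ℝ)+1)
        - legCoeff dω (p+1) / (2*((p+1:ℕ):ℝ)+1) :=
      mul_right_cancel₀ (pow_ne_zero p (by norm_num : (-1:ℝ) ≠ 0)) h2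
    rw [hI, he]
    push_cast
    ring
end

section
/- Let p ≥ 1 be an integer and let ω ∈ W^{1,1}(−1,1). Let P⁻ (resp. P⁺) be a polynomial of degree at most p satisfying ∫_{−1}^{1}(P^± − ω)v dξ = 0 for every polynomial v of degree at most p−1, together with P⁻(1) = ω(1) (resp. P⁺(−1) = ω(−1)). Then |(ω − P⁻)(−1)| = (2/(2p+1))·|ω̂′_p| and |(ω − P⁺)(1)| = (2/(2p+1))·|ω̂′_p|, where ω̂′_p = ((2p+1)/2)∫_{−1}^{1} ω′(ξ)L_p(ξ) dξ is the p-th Legendre coefficient of ω′. -/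
open MeasureTheory Set

namespace StmtTwoAux

open Polynomial

noncomputable def U (p : ℕ) : Polynomial ℝ := ((X : Polynomial ℝ) ^ 2 - 1) ^ p

lemma iteratedDeriv_polyeval (n : ℕ) (q : Polynomial ℝ) :
    iteratedDeriv n (fun x : ℝ => q.eval x) = fun x => (derivative^[n] q).eval x := by
  induction n with
  | zero => simp
  | succ n ih =>
    funext x
    rw [iteratedDeriv_succ, ih, Function.iterate_succ_apply']
    exact ((derivative^[n] q).hasDerivAt x).deriv

lemma legendre_eq (p : ℕ) (x : ℝ) :
    legendre p x = (1 / ((2 : ℝ) ^ p * (Nat.factorial p : ℝ))) *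
      (derivative^[p] (U p)).eval x := by
  unfold legendre
  congr 1
  have h : (fun y : ℝ => (y ^ 2 - 1) ^ p) = fun y : ℝ => (U p).eval y := by
    funext y; simp [U]
  rw [h, iteratedDeriv_polyeval]

lemma U_eval_boundary {p k : ℕ} (hk : k < p) {x : ℝ} (hx : x ^ 2 = 1) :
    (derivative^[k] (U p)).eval x = 0 := by
  obtain ⟨r, hr⟩ := pow_sub_dvd_iterate_derivative_pow ((X : Polynomial ℝ) ^ 2 - 1) p k
  have hpk : p - k ≠ 0 := by omega
  rw [U, hr]
  simp [hx, zero_pow hpk]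

lemma polyInt (q : Polynomial ℝ) : IntervalIntegrable (fun x => q.eval x) volume (-1) 1 :=
  q.continuous.intervalIntegrable _ _

lemma polyInt2 (q r : Polynomial ℝ) :
    IntervalIntegrable (fun x => q.eval x * r.eval x) volume (-1) 1 :=
  (q.continuous.mul r.continuous).intervalIntegrable _ _

lemma ibp_step {p m : ℕ} (hm : m < p) (q : Polynomial ℝ) :
    ∫ x in (-1 : ℝ)..1, (derivative^[m + 1] (U p)).eval x * q.eval x
      = - ∫ x in (-1 : ℝ)..1, (derivative^[m] (U p)).eval x * (derivative q).eval x := by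
  have h := intervalIntegral.integral_deriv_mul_eq_sub (a := (-1 : ℝ)) (b := 1)
    (u := fun x => (derivative^[m] (U p)).eval x)
    (v := fun x => q.eval x)
    (u' := fun x => (derivative^[m + 1] (U p)).eval x)
    (v' := fun x => (derivative q).eval x)
    (fun x _ => by
      simpa [Function.iterate_succ_apply'] using (derivative^[m] (U p)).hasDerivAt x)
    (fun x _ => q.hasDerivAt x) (polyInt _) (polyInt _)
  rw [intervalIntegral.integral_add (polyInt2 _ _) (polyInt2 _ _)] at h
  have h1 : (derivative^[m] (U p)).eval (1 : ℝ) = 0 := U_eval_boundary hm (by norm_num)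
  have h2 : (derivative^[m] (U p)).eval (-1 : ℝ) = 0 := U_eval_boundary hm (by norm_num)
  simp only [h1, h2, zero_mul, mul_zero, sub_zero, zero_sub] at h
  linarith

lemma ibp_iter {p : ℕ} (k : ℕ) (hk : k ≤ p) (q : Polynomial ℝ) :
    ∫ x in (-1 : ℝ)..1, (derivative^[k] (U p)).eval x * q.eval x
      = (-1 : ℝ) ^ k * ∫ x in (-1 : ℝ)..1, (U p).eval x * (derivative^[k] q).eval x := by
  induction k generalizing q with
  | zero => simp
  | succ k ih =>
    rw [ibp_step (by omega) q, ih (by omega) (derivative q),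
      ← Function.iterate_succ_apply derivative k q]
    ring

lemma orth {p : ℕ} (q : Polynomial ℝ) (hq : q.natDegree < p) :
    ∫ x in (-1 : ℝ)..1, (derivative^[p] (U p)).eval x * q.eval x = 0 := by
  rw [ibp_iter p le_rfl q, iterate_derivative_eq_zero hq]
  simp

lemma orth' {p : ℕ} (q : Polynomial ℝ) (hq : q.natDegree < p) :
    ∫ x in (-1 : ℝ)..1, q.eval x * (derivative^[p] (U p)).eval x = 0 := by
  rw [← orth q hq]
  congr 1; funext x; ring

lemma Usplit (p : ℕ) :
    U p = ((X : Polynomial ℝ) - C 1) ^ p * ((X : Polynomial ℝ) - C (-1)) ^ p := by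
  rw [U, ← mul_pow]
  congr 1
  simp only [map_one, map_neg]
  ring

lemma Q_eval_one (p : ℕ) :
    (derivative^[p] (U p)).eval 1 = 2 ^ p * (Nat.factorial p : ℝ) := by
  rw [Usplit, iterate_derivative_mul, eval_finset_sum]
  rw [Finset.sum_eq_single 0]
  · rw [Nat.sub_zero, iterate_derivative_X_sub_pow_self, Function.iterate_zero_apply]
    simp
    ring
  · intro k hk hk0
    obtain ⟨r, hr⟩ := pow_sub_dvd_iterate_derivative_pow ((X : Polynomial ℝ) - C 1) p (p - k)
    have hkp : k ≤ p := Nat.lt_succ_iff.mp (Finset.mem_range.mp hk)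
    have hpk : p - (p - k) = k := by omega
    rw [hpk] at hr
    have hzero : (derivative^[p - k] (((X : Polynomial ℝ) - C 1) ^ p)).eval 1 = 0 := by
      rw [hr]
      simp [zero_pow hk0]
    rw [eval_smul, eval_mul, hzero, zero_mul, smul_zero]
  · intro h
    simp at h

lemma Q_eval_neg_one (p : ℕ) :
    (derivative^[p] (U p)).eval (-1) = (-2) ^ p * (Nat.factorial p : ℝ) := by
  rw [Usplit, iterate_derivative_mul, eval_finset_sum]
  rw [Finset.sum_eq_single p]
  · rw [Nat.sub_self, Function.iterate_zero_apply, iterate_derivative_X_sub_pow_self]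
    simp only [Nat.choose_self, one_smul, eval_mul, eval_pow, eval_sub, eval_X, eval_C,
      eval_natCast, eval_one]
    norm_num [mul_comm]
  · intro k hk hkp
    obtain ⟨r, hr⟩ := pow_sub_dvd_iterate_derivative_pow ((X : Polynomial ℝ) - C (-1)) p k
    have hzero : (derivative^[k] (((X : Polynomial ℝ) - C (-1)) ^ p)).eval (-1) = 0 := by
      rw [hr]
      have hne : p - k ≠ 0 := by
        have : k ≤ p := Nat.lt_succ_iff.mp (Finset.mem_range.mp hk)
        omega
      simp [zero_pow hne]
    rw [eval_smul, eval_mul, hzero, mul_zero, smul_zero]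
  · intro h
    simp at h

lemma degQ' {p : ℕ} (hp : 1 ≤ p) : (derivative (derivative^[p] (U p))).natDegree < p := by
  have h1 : (U p).natDegree = 2 * p := by
    rw [U, natDegree_pow]
    have : ((X : Polynomial ℝ) ^ 2 - 1) = (X : Polynomial ℝ) ^ 2 - C 1 := by simp
    rw [this, natDegree_X_pow_sub_C]
    ring
  have h2 : (derivative^[p] (U p)).natDegree ≤ p := by
    have := natDegree_iterate_derivative (U p) p
    omega
  have h3 := natDegree_derivative_le (derivative^[p] (U p))
  omega

/-- Key integration-by-parts identity. -/
lemma key (p : ℕ) (hp : 1 ≤ p) (ω dω : ℝ → ℝ)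
    (hcont : ContinuousOn ω (Set.Icc (-1 : ℝ) 1))
    (hderiv : ∀ x ∈ Set.Ioo (-1 : ℝ) 1, HasDerivAt ω (dω x) x)
    (hint : IntervalIntegrable dω volume (-1) 1)
    (P : Polynomial ℝ) (hdeg : P.natDegree ≤ p)
    (horth : ∀ v : Polynomial ℝ, v.natDegree < p →
        ∫ x in (-1 : ℝ)..1, (P.eval x - ω x) * v.eval x = 0) :
    ∫ x in (-1 : ℝ)..1, dω x * (derivative^[p] (U p)).eval x
      = (ω 1 - P.eval 1) * (derivative^[p] (U p)).eval 1
        - (ω (-1) - P.eval (-1)) * (derivative^[p] (U p)).eval (-1) := by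
  set Qp := derivative^[p] (U p) with hQp
  have huIcc : Set.uIcc (-1 : ℝ) 1 = Set.Icc (-1 : ℝ) 1 := uIcc_of_le (by norm_num)
  have hmin : min (-1 : ℝ) 1 = -1 := by norm_num
  have hmax : max (-1 : ℝ) 1 = 1 := by norm_num
  have hcont' : ContinuousOn ω (Set.uIcc (-1 : ℝ) 1) := by rw [huIcc]; exact hcont
  have hωint : IntervalIntegrable ω volume (-1) 1 := by
    apply ContinuousOn.intervalIntegrable; rwa [huIcc]
  -- (1) ∫ ω * Qp' = ω(1)Qp(1) - ω(-1)Qp(-1) - ∫ dω * Qp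
  have h1 := intervalIntegral.integral_mul_deriv_eq_deriv_mul_of_hasDerivAt
    (a := (-1 : ℝ)) (b := 1)
    (u := ω) (u' := dω)
    (v := fun x => Qp.eval x) (v' := fun x => (derivative Qp).eval x)
    hcont' (Qp.continuous.continuousOn)
    (by rw [hmin, hmax]; exact hderiv)
    (fun x _ => Qp.hasDerivAt x)
    hint (polyInt _)
  -- (2) ∫ P * Qp' = P(1)Qp(1) - P(-1)Qp(-1) - ∫ P' * Qp
  have h2 := intervalIntegral.integral_mul_deriv_eq_deriv_mul_of_hasDerivAt
    (a := (-1 : ℝ)) (b := 1)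
    (u := fun x => P.eval x) (u' := fun x => (derivative P).eval x)
    (v := fun x => Qp.eval x) (v' := fun x => (derivative Qp).eval x)
    (P.continuous.continuousOn) (Qp.continuous.continuousOn)
    (fun x _ => P.hasDerivAt x)
    (fun x _ => Qp.hasDerivAt x)
    (polyInt _) (polyInt _)
  have hP'deg : (derivative P).natDegree < p := by
    have := natDegree_derivative_le P
    omega
  have h2' : ∫ x in (-1 : ℝ)..1, (derivative P).eval x * Qp.eval x = 0 := orth' _ hP'deg
  rw [h2'] at h2
  -- (3) ∫ (P - ω) * Qp' = 0
  have hQ'deg : (derivative Qp).natDegree < p := degQ' hp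
  have h3 := horth (derivative Qp) hQ'deg
  have hsplit : ∫ x in (-1 : ℝ)..1, (P.eval x - ω x) * (derivative Qp).eval x
      = (∫ x in (-1 : ℝ)..1, P.eval x * (derivative Qp).eval x)
        - ∫ x in (-1 : ℝ)..1, ω x * (derivative Qp).eval x := by
    rw [← intervalIntegral.integral_sub (polyInt2 _ _)
      (hωint.mul_continuousOn ((derivative Qp).continuous.continuousOn))]
    congr 1; funext x; ring
  rw [hsplit] at h3
  linarith

end StmtTwoAux

/-- endpoint error identities for the Gauss–Radau projections:
`|(ω − Π_p^- ω)(-1)| = (2/(2p+1))|ω̂'_p|` and `|(ω − Π_p^+ ω)(1)| = (2/(2p+1))|ω̂'_p|`. -/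
theorem stmt_2 (p : ℕ) (hp : 1 ≤ p) (ω dω : ℝ → ℝ)
    (hcont : ContinuousOn ω (Set.Icc (-1 : ℝ) 1))
    (hderiv : ∀ x ∈ Set.Ioo (-1 : ℝ) 1, HasDerivAt ω (dω x) x)
    (hint : IntervalIntegrable dω volume (-1) 1)
    (hFTC : ∀ x ∈ Set.Icc (-1 : ℝ) 1, ω x = ω (-1) + ∫ t in (-1 : ℝ)..x, dω t)
    (Pm Pp : Polynomial ℝ)
    (hPmdeg : Pm.natDegree ≤ p)
    (hPmorth : ∀ v : Polynomial ℝ, v.natDegree < p →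
        ∫ x in (-1 : ℝ)..1, (Pm.eval x - ω x) * v.eval x = 0)
    (hPmend : Pm.eval 1 = ω 1)
    (hPpdeg : Pp.natDegree ≤ p)
    (hPporth : ∀ v : Polynomial ℝ, v.natDegree < p →
        ∫ x in (-1 : ℝ)..1, (Pp.eval x - ω x) * v.eval x = 0)
    (hPpend : Pp.eval (-1) = ω (-1)) :
    |ω (-1) - Pm.eval (-1)| = (2 / (2 * (p : ℝ) + 1)) * |legCoeff dω p| ∧
    |ω 1 - Pp.eval 1| = (2 / (2 * (p : ℝ) + 1)) * |legCoeff dω p| := by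
  classical
  set Qp := Polynomial.derivative^[p] (StmtTwoAux.U p) with hQpdef
  set c : ℝ := 1 / ((2 : ℝ) ^ p * (Nat.factorial p : ℝ)) with hc
  have hfac : (Nat.factorial p : ℝ) ≠ 0 := Nat.cast_ne_zero.mpr (Nat.factorial_ne_zero p)
  have h2p : ((2 : ℝ) ^ p) ≠ 0 := by positivity
  have hcQ1 : c * Qp.eval 1 = 1 := by
    rw [hc, hQpdef, StmtTwoAux.Q_eval_one]
    field_simp
  have hcQn1 : c * Qp.eval (-1) = (-1 : ℝ) ^ p := by
    rw [hc, hQpdef, StmtTwoAux.Q_eval_neg_one, neg_pow]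
    field_simp
  have hcoeff : legCoeff dω p
      = ((2 * (p : ℝ) + 1) / 2) * (c * ∫ x in (-1 : ℝ)..1, dω x * Qp.eval x) := by
    rw [legCoeff]
    congr 1
    rw [← intervalIntegral.integral_const_mul]
    congr 1
    funext x
    rw [StmtTwoAux.legendre_eq, ← hc, ← hQpdef]
    ring
  have hpos : (0 : ℝ) < 2 * (p : ℝ) + 1 := by positivity
  constructor
  · -- minus case
    have hk := StmtTwoAux.key p hp ω dω hcont hderiv hint Pm hPmdeg hPmorth
    rw [← hQpdef] at hk
    rw [hPmend] at hk
    have : legCoeff dω p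
        = ((2 * (p : ℝ) + 1) / 2) * ((-1 : ℝ) ^ (p + 1) * (ω (-1) - Pm.eval (-1))) := by
      rw [hcoeff, hk]
      have : c * ((ω 1 - ω 1) * Qp.eval 1 - (ω (-1) - Pm.eval (-1)) * Qp.eval (-1))
          = -((c * Qp.eval (-1)) * (ω (-1) - Pm.eval (-1))) := by ring
      rw [this, hcQn1]
      ring
    rw [this, abs_mul, abs_mul, abs_pow, abs_neg, abs_one, one_pow, one_mul]
    rw [abs_of_pos (by positivity : (0:ℝ) < (2 * (p : ℝ) + 1) / 2)]
    field_simp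
  · -- plus case
    have hk := StmtTwoAux.key p hp ω dω hcont hderiv hint Pp hPpdeg hPporth
    rw [← hQpdef] at hk
    rw [hPpend] at hk
    have : legCoeff dω p
        = ((2 * (p : ℝ) + 1) / 2) * (ω 1 - Pp.eval 1) := by
      rw [hcoeff, hk]
      have : c * ((ω 1 - Pp.eval 1) * Qp.eval 1 - (ω (-1) - ω (-1)) * Qp.eval (-1))
          = (c * Qp.eval 1) * (ω 1 - Pp.eval 1) := by ring
      rw [this, hcQ1]
      ring
    rw [this, abs_mul]
    rw [abs_of_pos (by positivity : (0:ℝ) < (2 * (p : ℝ) + 1) / 2)]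
    field_simp
end
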